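/- arXiv:1707.03992 — 2 statements merged into one kernel-verified Lean document; each statement's English description precedes it below -/
import Mathlib

section
/- Let V be finite, E the complete graph's edge set, and y : E → ℝ≥0 with y(δ(A)) ≥ 2, y(δ(B)) ≥ 2 for two sets A, B ⊆ V, and suppose U, W ⊆ V satisfy A = W \ U, B = U \ W, and y(δ(W)) = 1. Then y(δ(U)) ≥ 3. -/
open Finset

/-- The value `y(δ(U))` of the cut induced by `U` in the complete graph on `V`,
with edge weights `y` (given on unordered pairs). -/
noncomputable def cutVal {V : Type*} [Fintype V] [DecidableEq V]
    (y : Sym2 V → ℝ) (U : Finset V) : ℝ :=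
  ∑ v ∈ U, ∑ w ∈ Uᶜ, y s(v, w)

lemma cutVal_eq_sum {V : Type*} [Fintype V] [DecidableEq V]
    (y : Sym2 V → ℝ) (S : Finset V) :
    cutVal y S = ∑ v, ∑ w, if v ∈ S ∧ w ∉ S then y s(v, w) else 0 := by
  unfold cutVal
  have h1 : ∀ v, (∑ w, if v ∈ S ∧ w ∉ S then y s(v,w) else 0)
      = if v ∈ S then ∑ w ∈ Sᶜ, y s(v,w) else 0 := by
    intro v
    by_cases hv : v ∈ S <;>
      simp [hv, ← Finset.mem_compl, Finset.sum_ite_mem]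
  simp only [h1, Finset.sum_ite_mem, Finset.univ_inter]

lemma cutVal_sym {V : Type*} [Fintype V] [DecidableEq V]
    (y : Sym2 V → ℝ) (S : Finset V) :
    2 * cutVal y S
      = ∑ v, ∑ w, if (v ∈ S ∧ w ∉ S) ∨ (w ∈ S ∧ v ∉ S) then y s(v, w) else 0 := by
  have split : ∀ v w, (if (v ∈ S ∧ w ∉ S) ∨ (w ∈ S ∧ v ∉ S) then y s(v, w) else 0)
      = (if v ∈ S ∧ w ∉ S then y s(v, w) else 0)
        + (if w ∈ S ∧ v ∉ S then y s(v, w) else 0) := by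
    intro v w
    by_cases h1 : v ∈ S <;> by_cases h2 : w ∈ S <;> simp [h1, h2]
  simp only [split, Finset.sum_add_distrib]
  rw [two_mul, cutVal_eq_sum]
  congr 1
  rw [Finset.sum_comm]
  apply Finset.sum_congr rfl; intro v _
  apply Finset.sum_congr rfl; intro w _
  rw [Sym2.eq_swap]

lemma pt (p q r s : Prop) [Decidable p] [Decidable q] [Decidable r] [Decidable s]
    (a : ℝ) (ha : 0 ≤ a) :
    (if ((q ∧ ¬p) ∧ ¬(s ∧ ¬r)) ∨ ((s ∧ ¬r) ∧ ¬(q ∧ ¬p)) then a else 0)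
    + (if ((p ∧ ¬q) ∧ ¬(r ∧ ¬s)) ∨ ((r ∧ ¬s) ∧ ¬(p ∧ ¬q)) then a else 0)
    ≤ (if (p ∧ ¬r) ∨ (r ∧ ¬p) then a else 0)
      + (if (q ∧ ¬s) ∨ (s ∧ ¬q) then a else 0) := by
  by_cases p <;> by_cases q <;> by_cases r <;> by_cases s <;>
    simp_all

/-- Posimodularity of the cut function. -/
lemma posimodular {V : Type*} [Fintype V] [DecidableEq V]
    (y : Sym2 V → ℝ) (hy : ∀ e, 0 ≤ y e) (U W : Finset V) :
    cutVal y (W \ U) + cutVal y (U \ W) ≤ cutVal y U + cutVal y W := by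
  have key : 2 * cutVal y (W \ U) + 2 * cutVal y (U \ W)
      ≤ 2 * cutVal y U + 2 * cutVal y W := by
    rw [cutVal_sym, cutVal_sym, cutVal_sym, cutVal_sym,
        ← Finset.sum_add_distrib, ← Finset.sum_add_distrib]
    apply Finset.sum_le_sum; intro v _
    rw [← Finset.sum_add_distrib, ← Finset.sum_add_distrib]
    apply Finset.sum_le_sum; intro w _
    have := pt (v ∈ U) (v ∈ W) (w ∈ U) (w ∈ W) (y s(v, w)) (hy _)
    simp only [Finset.mem_sdiff] at *
    convert this using 2 <;> tauto
  linarith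

/-- The crossing argument: if `y(δ(W∖U)) ≥ 2`, `y(δ(U∖W)) ≥ 2` and `y(δ(W)) = 1`,
then `y(δ(U)) ≥ 3`. -/
theorem stmt_12 {V : Type*} [Fintype V] [DecidableEq V]
    (y : Sym2 V → ℝ) (hy : ∀ e, 0 ≤ y e) (A B U W : Finset V)
    (hA : 2 ≤ cutVal y A) (hB : 2 ≤ cutVal y B)
    (hAW : A = W \ U) (hBU : B = U \ W) (hW : cutVal y W = 1) :
    3 ≤ cutVal y U := by
  subst hAW hBU
  have := posimodular y hy U W
  linarith
end

section
/- Let V be finite, s ≠ t ∈ V, (V,S) a spanning tree, T := {v : deg_S(v) odd} △ {s} △ {t}, and y : E → ℝ≥0. Let 𝓛 be a family of s-t-cuts with |S ∩ C| = 1 for all C ∈ 𝓛, and suppose y(δ(U)) ≥ 1 for every U ⊂ V, U ≠ ∅, with δ(U) ∉ 𝓛 (taking representatives so that for s-t-cuts s ∈ U). Then y lies in the T-join polyhedron: y(δ(U)) ≥ 1 for every U ⊂ V with |U ∩ T| odd. -/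
open Finset
open scoped symmDiff

open scoped Classical in
/-- The set of edges `δ(U)` of the complete graph on `V` with exactly one endpoint in `U`. -/
noncomputable def cutEdges {V : Type*} [Fintype V] (U : Finset V) : Finset (Sym2 V) :=
  Finset.univ.filter (fun e => ∃ v w : V, e = s(v, w) ∧ v ∈ U ∧ w ∉ U)

open scoped Classical in
/-- The degree of `v` in the edge set `S`. -/
noncomputable def degS {V : Type*} (S : Finset (Sym2 V)) (v : V) : ℕ :=
  (S.filter (fun e => v ∈ e)).card

open scoped Classical in
/-- Parity correction set `T = {v : deg_S(v) odd} △ {s} △ {t}`. -/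
noncomputable def wrongParity {V : Type*} [Fintype V] (S : Finset (Sym2 V)) (s t : V) :
    Finset V :=
  (Finset.univ.filter (fun v => Odd (degS S v))) ∆ {s} ∆ {t}

-- Auxiliary lemmas
lemma zmod2_cast (n : ℕ) : (n : ZMod 2) = if Odd n then 1 else 0 := by
  rcases Nat.even_or_odd n with ⟨k, rfl⟩ | ⟨k, rfl⟩
  · rw [if_neg (by rw [Nat.not_odd_iff_even]; exact ⟨k, rfl⟩)]
    push_cast; exact CharTwo.add_self_eq_zero _
  · rw [if_pos ⟨k, rfl⟩]; push_cast
    have : (2 : ZMod 2) = 0 := by decide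
    rw [this]; ring
lemma card_symmDiff_zmod2 {α : Type*} [DecidableEq α] (X Y : Finset α) :
    ((X ∆ Y).card : ZMod 2) = X.card + Y.card := by
  have h : (X ∆ Y).card = (X \ Y).card + (Y \ X).card := by
    rw [symmDiff_def, Finset.sup_eq_union]
    exact Finset.card_union_of_disjoint (disjoint_sdiff_sdiff)
  have hX : (X ∩ Y).card + (X \ Y).card = X.card := Finset.card_inter_add_card_sdiff X Y
  have hY : (X ∩ Y).card + (Y \ X).card = Y.card := by
    rw [Finset.inter_comm]; exact Finset.card_inter_add_card_sdiff Y X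
  rw [h, ← hX, ← hY]
  push_cast
  have h2 : ((X ∩ Y).card : ZMod 2) + (X ∩ Y).card = 0 := CharTwo.add_self_eq_zero _
  linear_combination -h2


lemma mem_cutEdges {V : Type*} [Fintype V] (U : Finset V) (a b : V) :
    s(a, b) ∈ cutEdges U ↔ ((a ∈ U ∧ b ∉ U) ∨ (b ∈ U ∧ a ∉ U)) := by
  classical
  simp only [cutEdges, mem_filter, mem_univ, true_and]
  constructor
  · rintro ⟨v, w, he, hv, hw⟩
    rw [Sym2.eq_iff] at he
    rcases he with ⟨rfl, rfl⟩ | ⟨rfl, rfl⟩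
    · exact .inl ⟨hv, hw⟩
    · exact .inr ⟨hv, hw⟩
  · rintro (⟨h1, h2⟩ | ⟨h1, h2⟩)
    · exact ⟨a, b, rfl, h1, h2⟩
    · exact ⟨b, a, Sym2.eq_swap, h1, h2⟩

lemma filter_mem_edge {V : Type*} [Fintype V] [DecidableEq V] (U : Finset V) (a b : V)
    (hab : a ≠ b) :
    ((U.filter (fun v => v ∈ (s(a, b) : Sym2 V))).card : ZMod 2)
      = if s(a, b) ∈ cutEdges U then 1 else 0 := by
  classical
  have hfil : U.filter (fun v => v ∈ (s(a, b) : Sym2 V)) = U ∩ {a, b} := by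
    ext v; simp [Sym2.mem_iff]
  rw [hfil]
  simp only [mem_cutEdges]
  by_cases ha : a ∈ U <;> by_cases hb : b ∈ U
  · have : U ∩ {a, b} = {a, b} := by
      apply Finset.inter_eq_right.mpr; intro v hv
      simp at hv; rcases hv with rfl | rfl <;> assumption
    rw [this, Finset.card_pair hab, if_neg (by tauto)]; decide
  · have : U ∩ {a, b} = {a} := by
      ext v; simp only [mem_inter, mem_insert, mem_singleton]
      constructor
      · rintro ⟨hv, h | h⟩
        · exact h
        · subst h; exact absurd hv hb
      · rintro rfl; exact ⟨ha, Or.inl rfl⟩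
    rw [this, Finset.card_singleton, if_pos (by tauto)]; rfl
  · have : U ∩ {a, b} = {b} := by
      ext v; simp only [mem_inter, mem_insert, mem_singleton]
      constructor
      · rintro ⟨hv, h | h⟩
        · subst h; exact absurd hv ha
        · exact h
      · rintro rfl; exact ⟨hb, Or.inr rfl⟩
    rw [this, Finset.card_singleton, if_pos (by tauto)]; rfl
  · have : U ∩ {a, b} = ∅ := by
      ext v; simp only [mem_inter, mem_insert, mem_singleton, Finset.notMem_empty, iff_false]
      rintro ⟨hv, rfl | rfl⟩ <;> tauto
    rw [this, Finset.card_empty, if_neg (by tauto)]; rfl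

lemma handshake {V : Type*} [Fintype V] [DecidableEq V] (S : Finset (Sym2 V))
    (hdiag : ∀ e ∈ S, ¬ e.IsDiag) (U : Finset V) :
    (∑ v ∈ U, (degS S v : ZMod 2)) = ((S ∩ cutEdges U).card : ZMod 2) := by
  classical
  have h1 : (∑ v ∈ U, (degS S v : ZMod 2))
      = ∑ e ∈ S, ((U.filter (fun v => v ∈ e)).card : ZMod 2) := by
    simp only [degS, Finset.card_filter]
    push_cast
    rw [Finset.sum_comm]
  rw [h1]
  have h2 : ∀ e ∈ S, ((U.filter (fun v => v ∈ e)).card : ZMod 2)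
      = if e ∈ cutEdges U then 1 else 0 := by
    intro e he
    induction e with
    | _ a b =>
      have hab : a ≠ b := by
        intro h; exact hdiag _ he (by simp [Sym2.mk_isDiag_iff, h])
      exact filter_mem_edge U a b hab
  rw [Finset.sum_congr rfl h2, ← Finset.filter_mem_eq_inter, Finset.card_filter]
  push_cast
  rfl

lemma inter_parity {V : Type*} [Fintype V] [DecidableEq V] (S : Finset (Sym2 V))
    (hdiag : ∀ e ∈ S, ¬ e.IsDiag) (s t : V) (U : Finset V) :
    ((U ∩ wrongParity S s t).card : ZMod 2)
      = ((S ∩ cutEdges U).card : ZMod 2)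
        + (if s ∈ U then 1 else 0) + (if t ∈ U then 1 else 0) := by
  classical
  have hsing : ∀ x : V, ((U ∩ ({x} : Finset V)).card : ZMod 2) = if x ∈ U then 1 else 0 := by
    intro x
    by_cases h : x ∈ U
    · rw [if_pos h]
      have : U ∩ {x} = {x} := by ext v; simp; rintro rfl; exact h
      simp [this]
    · rw [if_neg h]
      have : U ∩ {x} = ∅ := by ext v; simp; rintro hv rfl; exact h hv
      simp [this]
  have hP : ((U ∩ Finset.univ.filter (fun v => Odd (degS S v))).card : ZMod 2)
      = ((S ∩ cutEdges U).card : ZMod 2) := by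
    rw [← handshake S hdiag U]
    have hUP : U ∩ Finset.univ.filter (fun v => Odd (degS S v))
        = U.filter (fun v => Odd (degS S v)) := by
      ext v; simp
    rw [hUP, Finset.card_filter]
    push_cast
    exact Finset.sum_congr rfl fun v _ => ((zmod2_cast _).symm)
  have hset : U ∩ wrongParity S s t
      = ((U ∩ Finset.univ.filter (fun v => Odd (degS S v))) ∆ (U ∩ {s})) ∆ (U ∩ {t}) := by
    ext v
    simp only [wrongParity, Finset.mem_inter, Finset.mem_symmDiff, Finset.mem_filter,
      Finset.mem_univ, true_and, Finset.mem_singleton]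
    tauto
  rw [hset, card_symmDiff_zmod2, card_symmDiff_zmod2, hP, hsing, hsing]


/-- If `𝓛` is a family of lonely `s`-`t`-cuts (crossed exactly once by the spanning
tree `S`) and `y` has value at least `1` on every other cut, then `y` lies in the
`T`-join polyhedron for `T = {v : deg_S(v) odd} △ {s} △ {t}`. -/
theorem stmt_19 {V : Type*} [Fintype V] [DecidableEq V] (s t : V) (hst : s ≠ t)
    (S : Finset (Sym2 V)) (hdiag : ∀ e ∈ S, ¬ e.IsDiag)
    (htree : (SimpleGraph.fromEdgeSet (S : Set (Sym2 V))).IsTree)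
    (y : Sym2 V → ℝ) (hy : ∀ e, 0 ≤ y e)
    (𝓛 : Set (Finset V))
    (hL : ∀ A ∈ 𝓛, s ∈ A ∧ t ∉ A ∧ (S ∩ cutEdges A).card = 1)
    (hy1 : ∀ U : Finset V, U.Nonempty → U ≠ univ →
      (∀ A ∈ 𝓛, cutEdges U ≠ cutEdges A) → 1 ≤ cutVal y U) :
    ∀ U : Finset V, U ⊂ univ → Odd ((U ∩ wrongParity S s t).card) →
      1 ≤ cutVal y U := by
  intro U hU hodd
  have hne : U.Nonempty := by
    have hpos : 0 < (U ∩ wrongParity S s t).card := by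
      rcases hodd with ⟨k, hk⟩; omega
    obtain ⟨v, hv⟩ := Finset.card_pos.mp hpos
    exact ⟨v, (Finset.mem_inter.mp hv).1⟩
  refine hy1 U hne (ne_of_ssubset hU) ?_
  intro A hA hEq
  obtain ⟨hsA, htA, hcard⟩ := hL A hA
  have hstU : s(s, t) ∈ cutEdges U := by
    rw [hEq]; exact (mem_cutEdges A s t).mpr (Or.inl ⟨hsA, htA⟩)
  rw [mem_cutEdges] at hstU
  have hpar := inter_parity S hdiag s t U
  rw [hEq, hcard] at hpar
  have hc1 : ((U ∩ wrongParity S s t).card : ZMod 2) = 1 := by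
    rw [zmod2_cast, if_pos hodd]
  rw [hc1] at hpar
  rcases hstU with ⟨h1, h2⟩ | ⟨h1, h2⟩
  · rw [if_pos h1, if_neg h2] at hpar
    revert hpar; decide
  · rw [if_neg h2, if_pos h1] at hpar
    revert hpar; decide
end
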